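/- Let I be a nonempty finite set of players with finite nonempty action sets A_i and utilities u_i : (∏_{j∈I} A_j) → ℝ, let s be a mixed strategy profile, and fix a player i. Then the supremum of U_i([s_i, s_{-i}]) over all mixed strategies s_i of player i is attained and equals the maximum over pure actions: max over mixed s_i of U_i([s_i, s_{-i}]) = max_{a_i ∈ A_i} U_i([a_i, s_{-i}]). -/
import Mathlib


open Finset

/-- Expected utility of player `i` for the mixed strategy profile `s` in a finite game
with utilities `u`. -/
noncomputable def expUtil {I : Type*} [Fintype I] [DecidableEq I]
    {A : I → Type*} [∀ i, Fintype (A i)]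
    (u : I → (∀ j, A j) → ℝ) (s : ∀ i, A i → ℝ) (i : I) : ℝ :=
  ∑ a : ∀ j, A j, (∏ j, s j (a j)) * u i a

/-- The profile `[a, s_{-i}]`: player `i` plays the Dirac strategy at `a`, others play `s`. -/
noncomputable def pureAt {I : Type*} [DecidableEq I]
    {A : I → Type*} [∀ i, DecidableEq (A i)]
    (s : ∀ i, A i → ℝ) (i : I) (a : A i) : ∀ j, A j → ℝ :=
  Function.update s i (fun b => if b = a then (1 : ℝ) else 0)

lemma prod_update_eval {I : Type*} [Fintype I] [DecidableEq I]
    {A : I → Type*} (s : ∀ i, A i → ℝ) (i : I) (t : A i → ℝ) (a : ∀ j, A j) :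
    (∏ j, (Function.update s i t) j (a j)) = t (a i) * ∏ j ∈ univ.erase i, s j (a j) := by
  rw [← Finset.prod_erase_mul _ _ (mem_univ i), Function.update_self, mul_comm]
  congr 1
  apply Finset.prod_congr rfl
  intro j hj
  rw [Function.update_of_ne (Finset.ne_of_mem_erase hj)]

lemma expUtil_update {I : Type*} [Fintype I] [DecidableEq I]
    {A : I → Type*} [∀ i, Fintype (A i)] [∀ i, DecidableEq (A i)]
    (u : I → (∀ j, A j) → ℝ) (s : ∀ i, A i → ℝ) (i : I) (t : A i → ℝ) :
    expUtil u (Function.update s i t) i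
      = ∑ b : A i, t b * expUtil u (pureAt s i b) i := by
  unfold expUtil pureAt
  simp only [prod_update_eval, Finset.mul_sum]
  rw [Finset.sum_comm]
  apply Finset.sum_congr rfl
  intro a _
  simp only [mul_ite, mul_one, mul_zero, ite_mul, zero_mul, mul_assoc]
  rw [Finset.sum_ite_eq]
  simp

/-- For a fixed player `i` and fixed opponent strategies `s_{-i}`, the supremum of the
expected utility `U_i([s_i, s_{-i}])` over all mixed strategies `s_i` of player `i` is
attained and equals the maximum of `U_i([a_i, s_{-i}])` over pure actions `a_i ∈ A_i`. -/
theorem best_mixed_reply_equals_best_pure_reply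
    {I : Type*} [Fintype I] [DecidableEq I] [Nonempty I]
    {A : I → Type*} [∀ i, Fintype (A i)] [∀ i, DecidableEq (A i)] [∀ i, Nonempty (A i)]
    (u : I → (∀ j, A j) → ℝ) (s : ∀ i, A i → ℝ)
    (hpos : ∀ i a, 0 ≤ s i a) (hsum : ∀ i, ∑ a, s i a = 1) (i : I) :
    IsGreatest
      {x : ℝ | ∃ t : A i → ℝ, (∀ a, 0 ≤ t a) ∧ (∑ a, t a = 1) ∧
          x = expUtil u (Function.update s i t) i}
      (Finset.univ.sup' Finset.univ_nonempty
        (fun a : A i => expUtil u (pureAt s i a) i)) := by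
  set M := Finset.univ.sup' Finset.univ_nonempty
        (fun a : A i => expUtil u (pureAt s i a) i) with hM
  constructor
  · obtain ⟨a0, _, ha0⟩ := Finset.exists_mem_eq_sup' (Finset.univ_nonempty)
      (fun a : A i => expUtil u (pureAt s i a) i)
    refine ⟨fun b => if b = a0 then 1 else 0, fun b => by positivity, by simp, ?_⟩
    rw [hM, ha0]; rfl
  · rintro x ⟨t, ht0, ht1, rfl⟩
    rw [expUtil_update]
    calc ∑ b : A i, t b * expUtil u (pureAt s i b) i
        ≤ ∑ b : A i, t b * M := by
          refine Finset.sum_le_sum fun b _ => mul_le_mul_of_nonneg_left ?_ (ht0 b)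
          exact Finset.le_sup' (fun a : A i => expUtil u (pureAt s i a) i) (mem_univ b)
      _ = M := by rw [← Finset.sum_mul, ht1, one_mul]
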